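/- Assume r < γ and I ≥ K e^{γt}. Then V₄(S,I,t) = S + I − K e^{γt}; i.e., every state (S,I,t) with I ≥ K e^{γt} belongs to the redemption region, and immediate redemption is optimal there. -/

import Mathlib

open MeasureTheory ProbabilityTheory Real Set

noncomputable section

/-- `W` is a standard one-dimensional Brownian motion with respect to the
filtration `𝓕` under the probability measure `P`. -/
structure IsBrownianMotion {Ω : Type*} {mΩ : MeasurableSpace Ω} (P : Measure Ω)
    (𝓕 : Filtration ℝ mΩ) (W : ℝ → Ω → ℝ) : Prop where
  adapted : Adapted 𝓕 W
  indep_increments : ∀ s t : ℝ, 0 ≤ s → s ≤ t →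
    Indep (MeasurableSpace.comap (fun ω => W t ω - W s ω)
      (inferInstance : MeasurableSpace ℝ)) (𝓕 s) P
  gaussian_increments : ∀ s t : ℝ, 0 ≤ s → s ≤ t →
    P.map (fun ω => W t ω - W s ω) = gaussianReal 0 (t - s).toNNReal
  continuous_paths : ∀ ω, Continuous fun u => W u ω
  init : ∀ ω, W 0 ω = 0

variable {Ω : Type*} {mΩ : MeasurableSpace Ω}

/-- Risk-neutral stock price at time `u`, started at `S` at time `t`:
`S_u = S · exp((r−δ−σ²/2)(u−t) + σ(W_u − W_t))`. -/
def stockPrice (W : ℝ → Ω → ℝ) (r δ σ S t u : ℝ) (ω : Ω) : ℝ :=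
  S * Real.exp ((r - δ - σ ^ 2 / 2) * (u - t) + σ * (W u ω - W t ω))

/-- Dividend account `I_u = I e^{r(u−t)} + ∫_t^u δ e^{r(u−v)} S_v dv`. -/
def divAccount (W : ℝ → Ω → ℝ) (r δ σ S I t u : ℝ) (ω : Ω) : ℝ :=
  I * Real.exp (r * (u - t)) +
    ∫ v in t..u, δ * Real.exp (r * (u - v)) * stockPrice W r δ σ S t v ω

/-- Discounted expected payoff `E[e^{−r(τ−t)}(S_τ + I_τ − K e^{γτ})⁺]` for the
stopping rule `τ` (accumulated dividends returned to the borrower on redemption). -/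
def payoff4 (P : Measure Ω) (W : ℝ → Ω → ℝ) (r δ σ K γ S I t : ℝ) (τ : Ω → ℝ) : ℝ :=
  ∫ ω, Real.exp (-(r * (τ ω - t))) *
    max (stockPrice W r δ σ S t (τ ω) ω + divAccount W r δ σ S I t (τ ω) ω
      - K * Real.exp (γ * τ ω)) 0 ∂P

/-- Stock-loan value `V₄(S,I,t)` when accumulated dividends are returned to the
borrower on redemption. -/
def V4 (P : Measure Ω) (F : Filtration ℝ mΩ) (W : ℝ → Ω → ℝ)
    (r δ σ K γ T S I t : ℝ) : ℝ :=
  sSup {x | ∃ τ : Ω → ℝ, IsStoppingTime F (fun ω => (τ ω : WithTop ℝ)) ∧ (∀ ω, τ ω ∈ Set.Icc t T) ∧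
    x = payoff4 P W r δ σ K γ S I t τ}

/-!
Redeeming at once pays `S + I - K e^{γt}`. For any stopping time `τ`, discount the payoff at
rate `r`: the loan term `e^{-r(τ-t)} K e^{γτ}` is at least `K e^{γt}` because `γ ≥ r`, and the
stock and dividend terms add up to `G_τ + I`, where
`G_u = e^{-r(u-t)} S_u + ∫_t^u δ e^{-r(s-t)} S_s ds` is a nonnegative martingale with
`G_t = S`. Optional stopping
holds for the approximations of `τ` from above by grid times, since there `G` telescopes into
finitely many increments over cells that `τ` has not yet reached; Fatou's lemma and continuity of
`G` pass to the limit and give `E[G_τ] ≤ S`. Hence no stopping rule beats immediate redemption.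
-/

namespace IsBrownianMotion

variable {P : Measure Ω} {F : Filtration ℝ mΩ} {W : ℝ → Ω → ℝ}

lemma measurable (hW : IsBrownianMotion P F W) (u : ℝ) : Measurable (W u) :=
  (hW.adapted u).mono (F.le u) le_rfl

lemma measurable_uncurry (hW : IsBrownianMotion P F W) : Measurable (Function.uncurry W) :=
  measurable_uncurry_of_continuous_of_measurable hW.continuous_paths hW.measurable

lemma integrable_exp_mul_increment [IsProbabilityMeasure P] (hW : IsBrownianMotion P F W)
    {a b : ℝ} (ha : 0 ≤ a) (hab : a ≤ b) (c : ℝ) :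
    Integrable (fun ω => exp (c * (W b ω - W a ω))) P := by
  rw [← mgf_pos_iff, mgf_gaussianReal (hW.gaussian_increments a b ha hab)]
  exact exp_pos _

lemma integral_exp_mul_increment [IsProbabilityMeasure P] (hW : IsBrownianMotion P F W)
    {a b : ℝ} (ha : 0 ≤ a) (hab : a ≤ b) (c : ℝ) :
    ∫ ω, exp (c * (W b ω - W a ω)) ∂P = exp (c ^ 2 * (b - a) / 2) := by
  rw [← mgf, mgf_gaussianReal (hW.gaussian_increments a b ha hab),
    Real.coe_toNNReal _ (sub_nonneg.2 hab)]
  ring_nf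

lemma indepFun_increment (hW : IsBrownianMotion P F W) {a b : ℝ} (ha : 0 ≤ a) (hab : a ≤ b)
    {H : Ω → ℝ} (hH : Measurable[F a] H) :
    IndepFun H (fun ω => W b ω - W a ω) P := by
  rw [IndepFun_iff_Indep]
  exact indep_of_indep_of_le_left (hW.indep_increments a b ha hab).symm (hH.comap_le)

end IsBrownianMotion

/-- `e^{-r(u-t)} S_u`, which no longer depends on `r`. -/
def discountedStock (W : ℝ → Ω → ℝ) (δ σ S t u : ℝ) (ω : Ω) : ℝ :=
  S * exp ((-δ - σ ^ 2 / 2) * (u - t) + σ * (W u ω - W t ω))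

section DiscountedStock

variable {P : Measure Ω} {F : Filtration ℝ mΩ} {W : ℝ → Ω → ℝ} {δ σ S t u v : ℝ}

lemma exp_neg_mul_stockPrice (r : ℝ) (ω : Ω) :
    exp (-(r * (u - t))) * stockPrice W r δ σ S t u ω = discountedStock W δ σ S t u ω := by
  rw [stockPrice, discountedStock, mul_left_comm, ← exp_add]
  ring_nf

@[simp]
lemma discountedStock_self (ω : Ω) : discountedStock W δ σ S t t ω = S := by
  simp [discountedStock]

lemma discountedStock_nonneg (hS : 0 ≤ S) (ω : Ω) : 0 ≤ discountedStock W δ σ S t u ω :=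
  mul_nonneg hS (exp_pos _).le

lemma discountedStock_eq_mul_exp_increment (ω : Ω) :
    discountedStock W δ σ S t v ω = discountedStock W δ σ S t u ω *
      exp ((-δ - σ ^ 2 / 2) * (v - u)) * exp (σ * (W v ω - W u ω)) := by
  rw [discountedStock, discountedStock, mul_assoc, mul_assoc, ← exp_add, ← exp_add]
  ring_nf

lemma continuous_discountedStock (hW : IsBrownianMotion P F W) (ω : Ω) :
    Continuous fun u => discountedStock W δ σ S t u ω := by
  have := hW.continuous_paths ω
  unfold discountedStock
  fun_prop

lemma measurable_discountedStock_of_le (hW : IsBrownianMotion P F W) (htu : t ≤ u) :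
    Measurable[F u] (discountedStock W δ σ S t u) := by
  have hu : Measurable[F u] (W u) := hW.adapted u
  have ht : Measurable[F u] (W t) := (hW.adapted t).mono (F.mono htu) le_rfl
  unfold discountedStock
  fun_prop

lemma measurable_discountedStock_uncurry (hW : IsBrownianMotion P F W) :
    Measurable fun p : ℝ × Ω => discountedStock W δ σ S t p.1 p.2 := by
  have hW₂ : Measurable fun p : ℝ × Ω => W p.1 p.2 := hW.measurable_uncurry
  have ht : Measurable fun p : ℝ × Ω => W t p.2 := (hW.measurable t).comp measurable_snd
  unfold discountedStock
  fun_prop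

variable [IsProbabilityMeasure P]

lemma integrable_discountedStock (hW : IsBrownianMotion P F W) (ht : 0 ≤ t) (htu : t ≤ u) :
    Integrable (discountedStock W δ σ S t u) P := by
  have h : discountedStock W δ σ S t u = fun ω =>
      S * exp ((-δ - σ ^ 2 / 2) * (u - t)) * exp (σ * (W u ω - W t ω)) := by
    funext ω
    simpa using discountedStock_eq_mul_exp_increment (W := W) (δ := δ) (σ := σ) (S := S)
      (t := t) (u := t) (v := u) ω
  rw [h]
  exact (hW.integrable_exp_mul_increment ht htu σ).const_mul _

lemma setIntegral_discountedStock (hW : IsBrownianMotion P F W) (ht : 0 ≤ t) (htu : t ≤ u)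
    (huv : u ≤ v) {A : Set Ω} (hA : MeasurableSet[F u] A) :
    ∫ ω in A, discountedStock W δ σ S t v ω ∂P
      = exp (-(δ * (v - u))) * ∫ ω in A, discountedStock W δ σ S t u ω ∂P := by
  set c := exp ((-δ - σ ^ 2 / 2) * (v - u))
  have hH : Measurable[F u] fun ω => A.indicator (discountedStock W δ σ S t u) ω * c :=
    ((measurable_discountedStock_of_le hW htu).indicator hA).mul_const c
  have hindep : IndepFun (fun ω => A.indicator (discountedStock W δ σ S t u) ω * c)
      (fun ω => exp (σ * (W v ω - W u ω))) P :=
    (hW.indepFun_increment (ht.trans htu) huv hH).comp measurable_id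
      (measurable_exp.comp (measurable_const_mul σ))
  have hint := ((integrable_discountedStock (δ := δ) (σ := σ) (S := S) hW ht htu).indicator
    (F.le u _ hA)).mul_const c
  calc ∫ ω in A, discountedStock W δ σ S t v ω ∂P
      = ∫ ω, (A.indicator (discountedStock W δ σ S t u) ω * c)
          * exp (σ * (W v ω - W u ω)) ∂P := by
        rw [← integral_indicator (F.le u _ hA)]
        congr 1 with ω
        by_cases hω : ω ∈ A
        · rw [indicator_of_mem hω, indicator_of_mem hω,
            discountedStock_eq_mul_exp_increment (u := u) (v := v) ω]
        · simp [hω]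
    _ = (∫ ω in A, discountedStock W δ σ S t u ω ∂P) * c * exp (σ ^ 2 * (v - u) / 2) := by
        rw [← Pi.mul_def (f := fun ω => A.indicator (discountedStock W δ σ S t u) ω * c),
          hindep.integral_mul_eq_mul_integral hint.aestronglyMeasurable
            (hW.integrable_exp_mul_increment (ht.trans htu) huv σ).aestronglyMeasurable,
          hW.integral_exp_mul_increment (ht.trans htu) huv, integral_mul_const,
          integral_indicator (F.le u _ hA)]
    _ = exp (-(δ * (v - u))) * ∫ ω in A, discountedStock W δ σ S t u ω ∂P := by
        rw [mul_assoc, ← exp_add, mul_comm]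
        ring_nf

end DiscountedStock

lemma integral_mul_exp_neg_mul_sub (δ u v : ℝ) :
    ∫ s in u..v, δ * exp (-(δ * (s - u))) = 1 - exp (-(δ * (v - u))) := by
  have hderiv (s : ℝ) :
      HasDerivAt (fun x => -exp (-(δ * (x - u)))) (δ * exp (-(δ * (s - u)))) s := by
    have hlin : HasDerivAt (fun x => -(δ * (x - u))) (-δ) s := by
      simpa using (((hasDerivAt_id s).sub_const u).const_mul δ).fun_neg
    exact hlin.exp.fun_neg.congr_deriv (by ring)
  rw [intervalIntegral.integral_eq_sub_of_hasDerivAt (fun s _ => hderiv s)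
    ((by fun_prop : Continuous fun s => δ * exp (-(δ * (s - u)))).intervalIntegrable u v)]
  simp only [sub_self, mul_zero, neg_zero, exp_zero]
  ring

section Dividends

variable {P : Measure Ω} [IsProbabilityMeasure P] {F : Filtration ℝ mΩ} {W : ℝ → Ω → ℝ}
  {δ σ S t u v : ℝ} {A : Set Ω}

lemma integrable_prod_discountedStock (hW : IsBrownianMotion P F W) (hδ : 0 ≤ δ) (hS : 0 ≤ S)
    (ht : 0 ≤ t) (htu : t ≤ u) (huv : u ≤ v) (hA : MeasurableSet[F u] A) :
    Integrable (Function.uncurry fun s ω => δ * discountedStock W δ σ S t s ω)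
      ((volume.restrict (uIoc u v)).prod (P.restrict A)) := by
  have hmeas : Measurable (Function.uncurry fun s ω => δ * discountedStock W δ σ S t s ω) :=
    (measurable_discountedStock_uncurry hW).const_mul δ
  rw [uIoc_of_le huv, integrable_prod_iff hmeas.aestronglyMeasurable]
  constructor
  · filter_upwards [ae_restrict_mem measurableSet_Ioc] with s hs
    exact ((integrable_discountedStock hW ht (htu.trans hs.1.le)).const_mul δ).integrableOn
  · have hcont : Continuous fun s =>
        δ * (exp (-(δ * (s - u))) * ∫ ω in A, discountedStock W δ σ S t u ω ∂P) := by
      fun_prop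
    refine hcont.integrableOn_Ioc.congr ?_
    filter_upwards [ae_restrict_mem measurableSet_Ioc] with s hs
    simp only [Function.uncurry_apply_pair, norm_mul, Real.norm_of_nonneg hδ,
      Real.norm_of_nonneg (discountedStock_nonneg hS _), integral_const_mul]
    rw [setIntegral_discountedStock hW ht htu hs.1.le hA]

lemma integrableOn_dividends (hW : IsBrownianMotion P F W) (hδ : 0 ≤ δ) (hS : 0 ≤ S)
    (ht : 0 ≤ t) (htu : t ≤ u) (huv : u ≤ v) (hA : MeasurableSet[F u] A) :
    IntegrableOn (fun ω => ∫ s in u..v, δ * discountedStock W δ σ S t s ω) A P := by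
  have := (integrable_prod_discountedStock (σ := σ) hW hδ hS ht htu huv hA).integral_prod_right
  simp only [Function.uncurry_apply_pair, uIoc_of_le huv] at this
  simp_rw [intervalIntegral.integral_of_le huv]
  exact this

lemma setIntegral_dividends (hW : IsBrownianMotion P F W) (hδ : 0 ≤ δ) (hS : 0 ≤ S)
    (ht : 0 ≤ t) (htu : t ≤ u) (huv : u ≤ v) (hA : MeasurableSet[F u] A) :
    ∫ ω in A, (∫ s in u..v, δ * discountedStock W δ σ S t s ω) ∂P
      = (1 - exp (-(δ * (v - u)))) * ∫ ω in A, discountedStock W δ σ S t u ω ∂P := by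
  rw [← intervalIntegral_integral_swap (integrable_prod_discountedStock hW hδ hS ht htu huv hA),
    ← integral_mul_exp_neg_mul_sub δ u v, ← intervalIntegral.integral_mul_const]
  refine intervalIntegral.integral_congr_ae ?_
  filter_upwards with s hs
  rw [uIoc_of_le huv] at hs
  rw [integral_const_mul, setIntegral_discountedStock hW ht htu hs.1.le hA, mul_assoc]

end Dividends

/-- Discounted value at time `u` of holding the stock from `t` on and collecting its dividends. -/
def discountedGains (W : ℝ → Ω → ℝ) (δ σ S t u : ℝ) (ω : Ω) : ℝ :=
  discountedStock W δ σ S t u ω + ∫ s in t..u, δ * discountedStock W δ σ S t s ω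

section DiscountedGains

variable {P : Measure Ω} {F : Filtration ℝ mΩ} {W : ℝ → Ω → ℝ} {δ σ S t u v : ℝ}

@[simp]
lemma discountedGains_self (ω : Ω) : discountedGains W δ σ S t t ω = S := by
  simp [discountedGains]

lemma discountedGains_nonneg (hδ : 0 ≤ δ) (hS : 0 ≤ S) (htu : t ≤ u) (ω : Ω) :
    0 ≤ discountedGains W δ σ S t u ω :=
  add_nonneg (discountedStock_nonneg hS ω) (intervalIntegral.integral_nonneg htu
    fun _ _ => mul_nonneg hδ (discountedStock_nonneg hS ω))

lemma continuous_discountedGains (hW : IsBrownianMotion P F W) (ω : Ω) :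
    Continuous fun u => discountedGains W δ σ S t u ω :=
  (continuous_discountedStock hW ω).add <| intervalIntegral.continuous_primitive
    (fun _ _ => ((continuous_discountedStock hW ω).const_mul δ).intervalIntegrable _ _) t

lemma discountedGains_sub (hW : IsBrownianMotion P F W) (ω : Ω) :
    discountedGains W δ σ S t v ω - discountedGains W δ σ S t u ω
      = discountedStock W δ σ S t v ω - discountedStock W δ σ S t u ω
        + ∫ s in u..v, δ * discountedStock W δ σ S t s ω := by
  have hint (a b : ℝ) :
      IntervalIntegrable (fun s => δ * discountedStock W δ σ S t s ω) volume a b :=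
    ((continuous_discountedStock hW ω).const_mul δ).intervalIntegrable a b
  rw [discountedGains, discountedGains, ← intervalIntegral.integral_interval_sub_left (hint t v)
    (hint t u)]
  ring

variable [IsProbabilityMeasure P] {A : Set Ω}

lemma integrableOn_discountedGains_sub (hW : IsBrownianMotion P F W) (hδ : 0 ≤ δ) (hS : 0 ≤ S)
    (ht : 0 ≤ t) (htu : t ≤ u) (huv : u ≤ v) (hA : MeasurableSet[F u] A) :
    IntegrableOn (fun ω => discountedGains W δ σ S t v ω - discountedGains W δ σ S t u ω)
      A P := by
  simp_rw [discountedGains_sub hW]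
  exact ((integrable_discountedStock hW ht (htu.trans huv)).integrableOn.sub
    (integrable_discountedStock hW ht htu).integrableOn).add
    (integrableOn_dividends hW hδ hS ht htu huv hA)

lemma setIntegral_discountedGains_sub (hW : IsBrownianMotion P F W) (hδ : 0 ≤ δ) (hS : 0 ≤ S)
    (ht : 0 ≤ t) (htu : t ≤ u) (huv : u ≤ v) (hA : MeasurableSet[F u] A) :
    ∫ ω in A, (discountedGains W δ σ S t v ω - discountedGains W δ σ S t u ω) ∂P = 0 := by
  have hv : IntegrableOn (discountedStock W δ σ S t v) A P :=
    (integrable_discountedStock hW ht (htu.trans huv)).integrableOn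
  have hu : IntegrableOn (discountedStock W δ σ S t u) A P :=
    (integrable_discountedStock hW ht htu).integrableOn
  simp_rw [discountedGains_sub hW]
  rw [integral_add (hv.fun_sub hu) (integrableOn_dividends hW hδ hS ht htu huv hA),
    integral_sub hv hu, setIntegral_dividends hW hδ hS ht htu huv hA,
    setIntegral_discountedStock hW ht htu huv hA]
  ring

end DiscountedGains

lemma Finset.sum_range_ite_lt_sub {M : Type*} [AddCommGroup M] (f : ℕ → M) {k N : ℕ}
    (hk : k ≤ N) :
    ∑ j ∈ Finset.range N, (if j < k then f (j + 1) - f j else 0) = f k - f 0 := by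
  rw [← Finset.sum_filter, ← Finset.sum_range_sub]
  congr 1
  ext j
  simp only [Finset.mem_filter, Finset.mem_range]
  omega

def gridPoint (t : ℝ) (n j : ℕ) : ℝ := t + j / (n + 1)

def gridIndex (t : ℝ) (n : ℕ) (x : ℝ) : ℕ := ⌈(x - t) * (n + 1)⌉₊

def gridCeil (t : ℝ) (n : ℕ) (x : ℝ) : ℝ := gridPoint t n (gridIndex t n x)

section Grid

variable {t x : ℝ} {n : ℕ}

@[simp]
lemma gridPoint_zero : gridPoint t n 0 = t := by
  simp [gridPoint]

lemma le_gridPoint (j : ℕ) : t ≤ gridPoint t n j :=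
  le_add_of_nonneg_right (by positivity)

lemma gridPoint_le_succ (j : ℕ) : gridPoint t n j ≤ gridPoint t n (j + 1) := by
  unfold gridPoint
  gcongr
  simp

lemma gridPoint_lt_iff (j : ℕ) : gridPoint t n j < x ↔ j < gridIndex t n x := by
  rw [gridIndex, Nat.lt_ceil, gridPoint, ← lt_sub_iff_add_lt', div_lt_iff₀ (by positivity)]

lemma gridIndex_mono {y : ℝ} (hxy : x ≤ y) : gridIndex t n x ≤ gridIndex t n y :=
  Nat.ceil_mono (by gcongr)

lemma le_gridCeil (x : ℝ) : x ≤ gridCeil t n x := by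
  rw [gridCeil, gridPoint, ← sub_le_iff_le_add', le_div_iff₀ (by positivity)]
  exact Nat.le_ceil _

lemma gridCeil_lt (hx : t ≤ x) : gridCeil t n x < x + 1 / (n + 1) := by
  have hn : (0 : ℝ) < n + 1 := by positivity
  have hceil := div_lt_div_of_pos_right
    (Nat.ceil_lt_add_one (mul_nonneg (sub_nonneg.2 hx) hn.le)) hn
  rw [add_div, mul_div_cancel_right₀ _ hn.ne'] at hceil
  rw [gridCeil, gridPoint, gridIndex]
  linarith

lemma tendsto_gridCeil (hx : t ≤ x) :
    Filter.Tendsto (fun n => gridCeil t n x) Filter.atTop (nhds x) := by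
  refine tendsto_of_tendsto_of_tendsto_of_le_of_le tendsto_const_nhds ?_
    (fun _ => le_gridCeil x) (fun _ => (gridCeil_lt hx).le)
  simpa using (tendsto_const_nhds (x := x)).add tendsto_one_div_add_atTop_nhds_zero_nat

/-- The range of summation does not depend on `x`, so that for `x = τ ω` expectations can be
taken term by term. -/
lemma apply_gridCeil_eq_sum {M : Type*} [AddCommGroup M] (f : ℝ → M) {T : ℝ} (hxT : x ≤ T) :
    f (gridCeil t n x) = f t + ∑ j ∈ Finset.range (gridIndex t n T),
      (if gridPoint t n j < x then f (gridPoint t n (j + 1)) - f (gridPoint t n j) else 0) := by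
  simp_rw [gridCeil, gridPoint_lt_iff]
  rw [Finset.sum_range_ite_lt_sub (fun j => f (gridPoint t n j)) (gridIndex_mono hxT),
    gridPoint_zero]
  abel

end Grid

section OptionalStopping

variable {P : Measure Ω} [IsProbabilityMeasure P] {F : Filtration ℝ mΩ} {W : ℝ → Ω → ℝ}
  {δ σ S t T : ℝ} {τ : Ω → ℝ}

lemma discountedGains_gridCeil_eq_sum (hτT : ∀ ω, τ ω ≤ T) (n : ℕ) :
    (fun ω => discountedGains W δ σ S t (gridCeil t n (τ ω)) ω)
      = fun ω => S + ∑ j ∈ Finset.range (gridIndex t n T),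
        {ω | gridPoint t n j < τ ω}.indicator (fun ω => discountedGains W δ σ S t
          (gridPoint t n (j + 1)) ω - discountedGains W δ σ S t (gridPoint t n j) ω) ω := by
  funext ω
  rw [apply_gridCeil_eq_sum (fun u => discountedGains W δ σ S t u ω) (hτT ω),
    discountedGains_self]
  simp only [indicator_apply, mem_ofPred_eq]

lemma measurableSet_lt_of_isStoppingTime
    (hτ : IsStoppingTime F fun ω => (τ ω : WithTop ℝ)) (s : ℝ) :
    MeasurableSet[F s] {ω | s < τ ω} := by
  simpa using hτ.measurableSet_gt s

lemma integrable_discountedGains_gridCeil (hW : IsBrownianMotion P F W) (hδ : 0 ≤ δ)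
    (hS : 0 ≤ S) (ht : 0 ≤ t) (hτ : IsStoppingTime F fun ω => (τ ω : WithTop ℝ))
    (hτT : ∀ ω, τ ω ≤ T) (n : ℕ) :
    Integrable (fun ω => discountedGains W δ σ S t (gridCeil t n (τ ω)) ω) P := by
  rw [discountedGains_gridCeil_eq_sum hτT n]
  refine (integrable_const S).add (integrable_finsetSum _ fun j _ => ?_)
  exact (integrableOn_discountedGains_sub hW hδ hS ht (le_gridPoint j) (gridPoint_le_succ j)
    (measurableSet_lt_of_isStoppingTime hτ _)).integrable_indicator
    (F.le _ _ (measurableSet_lt_of_isStoppingTime hτ _))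

lemma integral_discountedGains_gridCeil (hW : IsBrownianMotion P F W) (hδ : 0 ≤ δ)
    (hS : 0 ≤ S) (ht : 0 ≤ t) (hτ : IsStoppingTime F fun ω => (τ ω : WithTop ℝ))
    (hτT : ∀ ω, τ ω ≤ T) (n : ℕ) :
    ∫ ω, discountedGains W δ σ S t (gridCeil t n (τ ω)) ω ∂P = S := by
  have hA (j : ℕ) := measurableSet_lt_of_isStoppingTime hτ (gridPoint t n j)
  have hint (j : ℕ) := (integrableOn_discountedGains_sub (δ := δ) (σ := σ) hW hδ hS ht
    (le_gridPoint j) (gridPoint_le_succ j) (hA j)).integrable_indicator (F.le _ _ (hA j))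
  rw [discountedGains_gridCeil_eq_sum hτT n,
    integral_add (integrable_const S) (integrable_finsetSum _ fun j _ => hint j),
    integral_finsetSum _ fun j _ => hint j]
  simp_rw [integral_indicator (F.le _ _ (hA _)),
    setIntegral_discountedGains_sub hW hδ hS ht (le_gridPoint _) (gridPoint_le_succ _) (hA _)]
  simp

lemma lintegral_ofReal_discountedGains_le (hW : IsBrownianMotion P F W) (hδ : 0 ≤ δ)
    (hS : 0 ≤ S) (ht : 0 ≤ t) (hτ : IsStoppingTime F fun ω => (τ ω : WithTop ℝ))
    (hτmem : ∀ ω, τ ω ∈ Icc t T) :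
    ∫⁻ ω, ENNReal.ofReal (discountedGains W δ σ S t (τ ω) ω) ∂P ≤ ENNReal.ofReal S := by
  have hτT (ω : Ω) := (hτmem ω).2
  have hlim (ω : Ω) : Filter.Tendsto
      (fun n => discountedGains W δ σ S t (gridCeil t n (τ ω)) ω)
      Filter.atTop (nhds (discountedGains W δ σ S t (τ ω) ω)) :=
    (continuous_discountedGains hW ω).continuousAt.tendsto.comp
      (tendsto_gridCeil (hτmem ω).1)
  calc ∫⁻ ω, ENNReal.ofReal (discountedGains W δ σ S t (τ ω) ω) ∂P
      = ∫⁻ ω, Filter.liminf (fun n => ENNReal.ofReal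
          (discountedGains W δ σ S t (gridCeil t n (τ ω)) ω)) Filter.atTop ∂P :=
        lintegral_congr fun ω =>
          (((ENNReal.continuous_ofReal.tendsto _).comp (hlim ω)).liminf_eq).symm
    _ ≤ Filter.liminf (fun n => ∫⁻ ω, ENNReal.ofReal
          (discountedGains W δ σ S t (gridCeil t n (τ ω)) ω) ∂P) Filter.atTop :=
        lintegral_liminf_le' fun n =>
          (integrable_discountedGains_gridCeil hW hδ hS ht hτ hτT n).aemeasurable.ennreal_ofReal
    _ = ENNReal.ofReal S := by
        simp_rw [← ofReal_integral_eq_lintegral_ofReal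
          (integrable_discountedGains_gridCeil hW hδ hS ht hτ hτT _)
          (ae_of_all _ fun ω => discountedGains_nonneg hδ hS (le_gridPoint _) ω),
          integral_discountedGains_gridCeil hW hδ hS ht hτ hτT]
        exact Filter.liminf_const _

end OptionalStopping

section Payoff

variable {P : Measure Ω} {W : ℝ → Ω → ℝ} {r δ σ K γ S I t u : ℝ}

lemma exp_neg_mul_divAccount (ω : Ω) :
    exp (-(r * (u - t))) * divAccount W r δ σ S I t u ω
      = I + ∫ s in t..u, δ * discountedStock W δ σ S t s ω := by
  rw [divAccount, mul_add, mul_left_comm, ← exp_add, neg_add_cancel, exp_zero, mul_one,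
    ← intervalIntegral.integral_const_mul]
  congr 1
  refine intervalIntegral.integral_congr fun s _ => ?_
  have hdisc : exp (-(r * (u - t))) * exp (r * (u - s)) = exp (-(r * (s - t))) := by
    rw [← exp_add]
    ring_nf
  simp only [← exp_neg_mul_stockPrice r ω]
  linear_combination δ * stockPrice W r δ σ S t s ω * hdisc

/-- Since the loan grows at rate `γ ≥ r`, its discounted value never drops below `K e^{γt}`. -/
lemma exp_neg_mul_max_payoff_le (hK : 0 ≤ K) (hrγ : r ≤ γ) (htu : t ≤ u) (ω : Ω) :
    exp (-(r * (u - t))) * max (stockPrice W r δ σ S t u ω + divAccount W r δ σ S I t u ω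
      - K * exp (γ * u)) 0
      ≤ max (discountedGains W δ σ S t u ω + (I - K * exp (γ * t))) 0 := by
  have hloan : K * exp (γ * t) ≤ exp (-(r * (u - t))) * (K * exp (γ * u)) := by
    rw [mul_left_comm, ← exp_add]
    gcongr
    nlinarith
  rw [mul_max_of_nonneg _ _ (exp_pos _).le, mul_zero]
  refine max_le_max ?_ le_rfl
  rw [mul_sub, mul_add, exp_neg_mul_stockPrice, exp_neg_mul_divAccount, discountedGains]
  linarith

variable [IsProbabilityMeasure P]

lemma payoff4_const :
    payoff4 P W r δ σ K γ S I t (fun _ => t) = max (S + I - K * exp (γ * t)) 0 := by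
  simp [payoff4, stockPrice, divAccount]

lemma payoff4_le {F : Filtration ℝ mΩ} {T : ℝ} {τ : Ω → ℝ} (hW : IsBrownianMotion P F W)
    (hδ : 0 ≤ δ) (hS : 0 ≤ S) (hK : 0 ≤ K) (hrγ : r ≤ γ) (ht : 0 ≤ t)
    (hI : K * exp (γ * t) ≤ I) (hτ : IsStoppingTime F fun ω => (τ ω : WithTop ℝ))
    (hτmem : ∀ ω, τ ω ∈ Icc t T) :
    payoff4 P W r δ σ K γ S I t τ ≤ S + I - K * exp (γ * t) := by
  have hequity : 0 ≤ I - K * exp (γ * t) := sub_nonneg.2 hI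
  set f := fun ω => exp (-(r * (τ ω - t))) * max (stockPrice W r δ σ S t (τ ω) ω
    + divAccount W r δ σ S I t (τ ω) ω - K * exp (γ * τ ω)) 0
  have hf_nonneg (ω : Ω) : 0 ≤ f ω := mul_nonneg (exp_pos _).le (le_max_right _ _)
  have hf_le (ω : Ω) : f ω ≤ discountedGains W δ σ S t (τ ω) ω + (I - K * exp (γ * t)) :=
    (exp_neg_mul_max_payoff_le hK hrγ (hτmem ω).1 ω).trans_eq
      (max_eq_left (add_nonneg (discountedGains_nonneg hδ hS (hτmem ω).1 ω) hequity))
  have hlint :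
      ∫⁻ ω, ENNReal.ofReal (f ω) ∂P ≤ ENNReal.ofReal (S + I - K * exp (γ * t)) :=
    calc ∫⁻ ω, ENNReal.ofReal (f ω) ∂P
        ≤ ∫⁻ ω, (ENNReal.ofReal (discountedGains W δ σ S t (τ ω) ω)
            + ENNReal.ofReal (I - K * exp (γ * t))) ∂P :=
          lintegral_mono fun ω => (ENNReal.ofReal_le_ofReal (hf_le ω)).trans ENNReal.ofReal_add_le
      _ = ∫⁻ ω, ENNReal.ofReal (discountedGains W δ σ S t (τ ω) ω) ∂P
            + ENNReal.ofReal (I - K * exp (γ * t)) := by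
          rw [lintegral_add_right _ measurable_const, lintegral_const, measure_univ, mul_one]
      _ ≤ ENNReal.ofReal S + ENNReal.ofReal (I - K * exp (γ * t)) := by
          gcongr
          exact lintegral_ofReal_discountedGains_le hW hδ hS ht hτ hτmem
      _ = ENNReal.ofReal (S + I - K * exp (γ * t)) := by
          rw [← ENNReal.ofReal_add hS hequity, add_sub_assoc]
  -- no measurability of `f` is needed: a non-integrable `f` has Bochner integral `0`
  by_cases hint : Integrable f P
  · rw [payoff4, integral_eq_lintegral_of_nonneg_ae (ae_of_all _ hf_nonneg)
      hint.aestronglyMeasurable]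
    exact ENNReal.toReal_le_of_le_ofReal (by linarith) hlint
  · rw [payoff4, integral_undef hint]
    linarith

end Payoff

theorem stmt_17_general {Ω : Type*} {mΩ : MeasurableSpace Ω} (P : Measure Ω)
    [IsProbabilityMeasure P] (F : Filtration ℝ mΩ) (W : ℝ → Ω → ℝ)
    (hW : IsBrownianMotion P F W)
    (r δ σ K γ T : ℝ) (hδ : 0 ≤ δ) (hK : 0 < K) (hrγ : r < γ) :
    ∀ S : ℝ, 0 < S → ∀ t ∈ Set.Icc (0:ℝ) T, ∀ I : ℝ, K * Real.exp (γ * t) ≤ I →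
      V4 P F W r δ σ K γ T S I t = S + I - K * Real.exp (γ * t) := by
  intro S hS t ⟨ht, htT⟩ I hI
  have hredeem : 0 ≤ S + I - K * exp (γ * t) := by linarith
  refine IsGreatest.csSup_eq
    ⟨⟨fun _ => t, isStoppingTime_const F t, fun _ => ⟨le_rfl, htT⟩, ?_⟩, ?_⟩
  · rw [payoff4_const, max_eq_left hredeem]
  · rintro _ ⟨τ, hτ, hτmem, rfl⟩
    exact payoff4_le hW hδ hS.le hK.le hrγ.le ht hI hτ hτmem

theorem stmt_17 {Ω : Type*} {mΩ : MeasurableSpace Ω} (P : Measure Ω)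
    [IsProbabilityMeasure P] (F : Filtration ℝ mΩ) (W : ℝ → Ω → ℝ)
    (hW : IsBrownianMotion P F W)
    (r δ σ K γ T : ℝ) (hr : 0 < r) (hδ : 0 ≤ δ) (hσ : 0 < σ) (hK : 0 < K)
    (hT : 0 < T) (hrγ : r < γ) :
    ∀ S : ℝ, 0 < S → ∀ t ∈ Set.Icc (0:ℝ) T, ∀ I : ℝ, K * Real.exp (γ * t) ≤ I →
      V4 P F W r δ σ K γ T S I t = S + I - K * Real.exp (γ * t) :=
  stmt_17_general P F W hW r δ σ K γ T hδ hK hrγ
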